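/- arXiv:2211.01410 — 2 statements merged into one kernel-verified Lean document; each statement's English description precedes it below -/
import Mathlib

section
/- For every natural number n, |T(n+1) − α·T(n)| < 2·α^(−n/2)/|β − γ|, where α is the Tribonacci constant and β, γ are the two non-real complex roots of x³ = x² + x + 1. -/
/-- The Tribonacci sequence: T(0)=0, T(1)=0, T(2)=1,
    T(n+3) = T(n+2) + T(n+1) + T(n). -/
def trib : ℕ → ℕ
  | 0 => 0
  | 1 => 0
  | 2 => 1
  | n + 3 => trib (n + 2) + trib (n + 1) + trib n

/-!
The real root `α` and the non-real roots `β`, `conj β` are the three roots of `X³ - X² - X - 1`,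
so `γ = conj β`, `α + β + γ = 1` and `α |β|² = 1`. The Binet-type identity
`(T(n+1) - α T(n)) (β - γ) = βⁿ - γⁿ = 2i Im βⁿ` then bounds the left side by `2 |β|ⁿ / |β - γ|`,
strictly because `Re βⁿ ≠ 0`, which comes down to the irrationality of `α`.
-/

open Complex ComplexConjugate

lemma trib_add_three (n : ℕ) : trib (n + 3) = trib (n + 2) + trib (n + 1) + trib n := rfl

lemma trib_pos : ∀ n, 0 < trib (n + 2)
  | 0 => Nat.one_pos
  | 1 => Nat.one_pos
  | n + 2 => by
    rw [trib_add_three]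
    exact Nat.add_pos_left (Nat.add_pos_left (trib_pos (n + 1)) _) _

section Roots

variable {R : Type*} [CommRing R] {a b c d : R}

lemma cast_trib_add_three (n : ℕ) : (trib (n + 3) : R) = trib (n + 2) + trib (n + 1) + trib n := by
  rw [trib_add_three, Nat.cast_add, Nat.cast_add]

/-- Binet-type formula: `T(n+1) - a T(n)` and `(bⁿ - cⁿ)/(b - c)` both satisfy the Tribonacci
recurrence and agree for `n = 0, 1, 2`. -/
lemma trib_succ_sub_mul_trib_mul_sub (hb : b ^ 3 = b ^ 2 + b + 1) (hc : c ^ 3 = c ^ 2 + c + 1)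
    (habc : a + b + c = 1) :
    ∀ n : ℕ, ((trib (n + 1) : R) - a * trib n) * (b - c) = b ^ n - c ^ n
  | 0 => by simp [trib]
  | 1 => by simp [trib]
  | 2 => by simp [trib]; linear_combination (c - b) * habc
  | n + 3 => by
    have h₀ := trib_succ_sub_mul_trib_mul_sub hb hc habc n
    have h₁ : ((trib (n + 2) : R) - a * trib (n + 1)) * (b - c) = b ^ (n + 1) - c ^ (n + 1) :=
      trib_succ_sub_mul_trib_mul_sub hb hc habc (n + 1)
    have h₂ : ((trib (n + 3) : R) - a * trib (n + 2)) * (b - c) = b ^ (n + 2) - c ^ (n + 2) :=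
      trib_succ_sub_mul_trib_mul_sub hb hc habc (n + 2)
    have hT₁ : (trib (n + 4) : R) = trib (n + 3) + trib (n + 2) + trib (n + 1) :=
      cast_trib_add_three (n + 1)
    have hT₀ : (trib (n + 3) : R) = trib (n + 2) + trib (n + 1) + trib n := cast_trib_add_three n
    linear_combination h₀ + h₁ + h₂ + (b - c) * (hT₁ - a * hT₀) - b ^ n * hb + c ^ n * hc

variable [IsDomain R]

lemma sq_add_mul_add_sq_of_roots (ha : a ^ 3 = a ^ 2 + a + 1) (hb : b ^ 3 = b ^ 2 + b + 1)
    (hab : a ≠ b) : a ^ 2 + a * b + b ^ 2 = a + b + 1 :=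
  mul_left_cancel₀ (sub_ne_zero.2 hab) (by linear_combination ha - hb)

lemma add_add_eq_one_of_roots (ha : a ^ 3 = a ^ 2 + a + 1) (hb : b ^ 3 = b ^ 2 + b + 1)
    (hc : c ^ 3 = c ^ 2 + c + 1) (hab : a ≠ b) (hac : a ≠ c) (hbc : b ≠ c) : a + b + c = 1 :=
  mul_left_cancel₀ (sub_ne_zero.2 hbc) <| by
    linear_combination sq_add_mul_add_sq_of_roots ha hb hab - sq_add_mul_add_sq_of_roots ha hc hac

lemma mul_add_mul_add_mul_of_roots (ha : a ^ 3 = a ^ 2 + a + 1) (hb : b ^ 3 = b ^ 2 + b + 1)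
    (hc : c ^ 3 = c ^ 2 + c + 1) (hab : a ≠ b) (hac : a ≠ c) (hbc : b ≠ c) :
    a * b + b * c + c * a = -1 := by
  linear_combination (a + b) * add_add_eq_one_of_roots ha hb hc hab hac hbc -
    sq_add_mul_add_sq_of_roots ha hb hab

lemma mul_mul_eq_one_of_roots (ha : a ^ 3 = a ^ 2 + a + 1) (hb : b ^ 3 = b ^ 2 + b + 1)
    (hc : c ^ 3 = c ^ 2 + c + 1) (hab : a ≠ b) (hac : a ≠ c) (hbc : b ≠ c) : a * b * c = 1 := by
  linear_combination ha - a ^ 2 * add_add_eq_one_of_roots ha hb hc hab hac hbc +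
    a * mul_add_mul_add_mul_of_roots ha hb hc hab hac hbc

lemma eq_or_eq_or_eq_of_roots (ha : a ^ 3 = a ^ 2 + a + 1) (hb : b ^ 3 = b ^ 2 + b + 1)
    (hc : c ^ 3 = c ^ 2 + c + 1) (hd : d ^ 3 = d ^ 2 + d + 1) (hab : a ≠ b) (hac : a ≠ c)
    (hbc : b ≠ c) : d = a ∨ d = b ∨ d = c := by
  have : (d - a) * (d - b) * (d - c) = 0 := by
    linear_combination hd - d ^ 2 * add_add_eq_one_of_roots ha hb hc hab hac hbc +
      d * mul_add_mul_add_mul_of_roots ha hb hc hab hac hbc -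
      mul_mul_eq_one_of_roots ha hb hc hab hac hbc
  simpa [sub_eq_zero, or_assoc] using this

end Roots

lemma irrational_of_pow_three_eq {α : ℝ} (hα : α ^ 3 = α ^ 2 + α + 1) : Irrational α := by
  rintro ⟨q, rfl⟩
  have hq : q ^ 3 = q ^ 2 + q + 1 := by exact_mod_cast hα
  have hint : IsIntegral ℤ q :=
    ⟨.X ^ 3 - .X ^ 2 - .X - 1, by monicity!, by simp; linear_combination hq⟩
  obtain ⟨z, rfl⟩ := IsIntegrallyClosed.isIntegral_iff.1 hint
  simp only [algebraMap_int_eq, eq_intCast] at hq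
  have hz : z * (z ^ 2 - z - 1) = 1 := by
    have : z ^ 3 = z ^ 2 + z + 1 := by exact_mod_cast hq
    linear_combination this
  rcases Int.eq_one_or_neg_one_of_mul_eq_one hz with rfl | rfl <;> norm_num at hz

lemma pow_eq_rpow_neg_div_two {r x : ℝ} (hr : 0 ≤ r) (h : r ^ 2 = x⁻¹) (n : ℕ) :
    r ^ n = x ^ (-(n : ℝ) / 2) := by
  have hx : 0 ≤ x := inv_nonneg.1 (h ▸ sq_nonneg r)
  rw [neg_div, Real.rpow_neg hx, ← Real.inv_rpow hx, ← h, ← Real.rpow_natCast r 2,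
    ← Real.rpow_mul hr, ← Real.rpow_natCast]
  congr 1
  ring

theorem Complex.norm_sub_conj (z : ℂ) : ‖z - conj z‖ = 2 * |z.im| := by
  rw [sub_conj, norm_mul, norm_I, mul_one, norm_real, Real.norm_eq_abs, abs_mul, abs_two]

section ComplexRoots

variable {α : ℝ} {β γ : ℂ}

lemma ofReal_ne_of_im_ne_zero (hβim : β.im ≠ 0) : (α : ℂ) ≠ β :=
  fun h => hβim (h ▸ ofReal_im α)

lemma ne_conj_of_im_ne_zero (hβim : β.im ≠ 0) : β ≠ conj β :=
  fun h => hβim (conj_eq_iff_im.1 h.symm)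

lemma conj_pow_three_eq (hβ : β ^ 3 = β ^ 2 + β + 1) : conj β ^ 3 = conj β ^ 2 + conj β + 1 := by
  simpa using congrArg conj hβ

lemma ofReal_pow_three_eq (hα : α ^ 3 = α ^ 2 + α + 1) : (α : ℂ) ^ 3 = (α : ℂ) ^ 2 + α + 1 := by
  exact_mod_cast hα

lemma ofReal_add_add_conj_eq_one (hα : α ^ 3 = α ^ 2 + α + 1) (hβ : β ^ 3 = β ^ 2 + β + 1)
    (hβim : β.im ≠ 0) : (α : ℂ) + β + conj β = 1 :=
  add_add_eq_one_of_roots (ofReal_pow_three_eq hα) hβ (conj_pow_three_eq hβ)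
    (ofReal_ne_of_im_ne_zero hβim) (ofReal_ne_of_im_ne_zero (by simpa using hβim))
    (ne_conj_of_im_ne_zero hβim)

lemma sq_norm_eq_inv (hα : α ^ 3 = α ^ 2 + α + 1) (hβ : β ^ 3 = β ^ 2 + β + 1)
    (hβim : β.im ≠ 0) : ‖β‖ ^ 2 = α⁻¹ := by
  have h := mul_mul_eq_one_of_roots (ofReal_pow_three_eq hα) hβ (conj_pow_three_eq hβ)
    (ofReal_ne_of_im_ne_zero hβim) (ofReal_ne_of_im_ne_zero (by simpa using hβim))
    (ne_conj_of_im_ne_zero hβim)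
  rw [mul_assoc, mul_conj, ← Complex.sq_norm] at h
  exact eq_inv_of_mul_eq_one_right (by exact_mod_cast h)

lemma eq_conj_of_roots (hα : α ^ 3 = α ^ 2 + α + 1) (hβ : β ^ 3 = β ^ 2 + β + 1)
    (hγ : γ ^ 3 = γ ^ 2 + γ + 1) (hβim : β.im ≠ 0) (hγim : γ.im ≠ 0) (hβγ : β ≠ γ) :
    γ = conj β := by
  rcases eq_or_eq_or_eq_of_roots (ofReal_pow_three_eq hα) hβ (conj_pow_three_eq hβ) hγ
    (ofReal_ne_of_im_ne_zero hβim) (ofReal_ne_of_im_ne_zero (by simpa using hβim))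
    (ne_conj_of_im_ne_zero hβim) with h | h | h
  · exact absurd h.symm (ofReal_ne_of_im_ne_zero hγim)
  · exact absurd h.symm hβγ
  · exact h

lemma abs_trib_succ_sub_mul_trib_mul_norm (hβ : β ^ 3 = β ^ 2 + β + 1)
    (hγ : γ ^ 3 = γ ^ 2 + γ + 1) (hsum : (α : ℂ) + β + γ = 1) (n : ℕ) :
    |(trib (n + 1) : ℝ) - α * trib n| * ‖β - γ‖ = ‖β ^ n - γ ^ n‖ := by
  rw [← trib_succ_sub_mul_trib_mul_sub hβ hγ hsum n, norm_mul, ← Real.norm_eq_abs, ← norm_real]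
  push_cast
  rfl

/-- If `βⁿ` were purely imaginary, `β²ⁿ` would be real, so `β²ⁿ = (conj β)²ⁿ` and
`T(2n+1) = α T(2n)`, contradicting the irrationality of `α`. -/
lemma re_pow_ne_zero_of_root (hα : α ^ 3 = α ^ 2 + α + 1) (hβ : β ^ 3 = β ^ 2 + β + 1)
    (hβim : β.im ≠ 0) : ∀ n : ℕ, (β ^ n).re ≠ 0
  | 0 => by simp
  | m + 1 => by
    intro hre
    have him : (β ^ (2 * (m + 1))).im = 0 := by rw [two_mul, pow_add, mul_im, hre]; ring
    have hconj : conj β ^ (2 * (m + 1)) = β ^ (2 * (m + 1)) := by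
      rw [← map_pow]
      exact conj_eq_iff_im.2 him
    have h := abs_trib_succ_sub_mul_trib_mul_norm hβ (conj_pow_three_eq hβ)
      (ofReal_add_add_conj_eq_one hα hβ hβim) (2 * (m + 1))
    rw [hconj, sub_self, norm_zero, mul_eq_zero, abs_eq_zero, sub_eq_zero, norm_eq_zero,
      sub_eq_zero] at h
    rcases h with h | h
    · have hk : trib (2 * (m + 1)) ≠ 0 := (trib_pos (2 * m)).ne'
      exact ((irrational_of_pow_three_eq hα).mul_natCast hk).ne_nat _ h.symm
    · exact ne_conj_of_im_ne_zero hβim h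

end ComplexRoots

/-- For every natural number `n`, `|T(n+1) − α·T(n)| < 2·α^(−n/2)/|β − γ|`,
    where `α` is the Tribonacci constant (the unique real root of `x³ = x² + x + 1`)
    and `β`, `γ` are the two non-real complex roots of `x³ = x² + x + 1`. -/
theorem trib_alpha_diff_bound (α : ℝ) (hα : α ^ 3 = α ^ 2 + α + 1)
    (β γ : ℂ) (hβ : β ^ 3 = β ^ 2 + β + 1) (hγ : γ ^ 3 = γ ^ 2 + γ + 1)
    (hβim : β.im ≠ 0) (hγim : γ.im ≠ 0) (hβγ : β ≠ γ) (n : ℕ) :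
    |(trib (n + 1) : ℝ) - α * trib n| < 2 * α ^ (-(n : ℝ) / 2) / ‖β - γ‖ := by
  have hγ_eq : γ = conj β := eq_conj_of_roots hα hβ hγ hβim hγim hβγ
  have hsum : (α : ℂ) + β + γ = 1 := hγ_eq ▸ ofReal_add_add_conj_eq_one hα hβ hβim
  rw [lt_div_iff₀ (norm_pos_iff.2 (sub_ne_zero.2 hβγ)),
    abs_trib_succ_sub_mul_trib_mul_norm hβ hγ hsum, hγ_eq, ← map_pow, norm_sub_conj,
    ← pow_eq_rpow_neg_div_two (norm_nonneg β) (sq_norm_eq_inv hα hβ hβim), ← norm_pow]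
  exact mul_lt_mul_of_pos_left (abs_im_lt_norm.2 (re_pow_ne_zero_of_root hα hβ hβim n)) two_pos
end

section
/- Let K ≥ 3 and let A = {i : 3 ≤ i ≤ K and T(i+1) − α·T(i) > 0}, and set n = ∑_{i∈A} T(i). Then A is a Tribonacci representation set (so it is the Tribonacci representation of n), and n is a positive record: for every integer m with 1 ≤ m < n, out(m) − α·m < (∑_{i∈A} T(i+1)) − α·n. -/
/-- A Tribonacci representation set: a finite set of naturals, all at least 3,
    containing no three consecutive integers. -/
def IsTribRep (S : Finset ℕ) : Prop :=
  (∀ i ∈ S, 3 ≤ i) ∧ ∀ i : ℕ, ¬(i ∈ S ∧ i + 1 ∈ S ∧ i + 2 ∈ S)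

/-!
Write `e i = T(i+1) - α T(i)`. Since `T` satisfies the recurrence with characteristic root
`α`, so does `e`, and dividing out the root gives `α e(i+2) + (α² - α) e(i+1) + e(i) = 0`;
as `α > 1`, three consecutive `e`'s cannot all be positive, so `A` is a representation set.
A representation with indices at most `K` sums to less than `T(K+1)`, so any `m` below `n` has
its indices in `[3, K]`. There `out(m) - α m = ∑_{i ∈ Sm} e i`, and dropping the non-positive
terms and adding the positive ones (at least one of which is missing, as `m < n`) strictly
increases the sum to `∑_{i ∈ A} e i = out(n) - α n`.
-/

open Finset

theorem Finset.sum_lt_sum_of_nonpos_of_pos {ι M : Type*} [DecidableEq ι] [AddCommMonoid M]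
    [PartialOrder M] [IsOrderedCancelAddMonoid M] {s t : Finset ι} {f : ι → M}
    (hs : ∀ i ∈ s, i ∉ t → f i ≤ 0) (ht : ∀ i ∈ t, 0 < f i) (hts : ¬ t ⊆ s) :
    ∑ i ∈ s, f i < ∑ i ∈ t, f i := by
  obtain ⟨a, hat, has⟩ := Finset.not_subset.mp hts
  calc ∑ i ∈ s, f i = ∑ i ∈ s ∩ t, f i + ∑ i ∈ s \ t, f i :=
        (sum_inter_add_sum_sdiff s t f).symm
    _ ≤ ∑ i ∈ s ∩ t, f i := by
      refine add_le_of_nonpos_right (sum_nonpos fun i hi => ?_)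
      rw [mem_sdiff] at hi
      exact hs i hi.1 hi.2
    _ < ∑ i ∈ t, f i :=
      sum_lt_sum_of_subset inter_subset_right hat (fun h => has (mem_inter.mp h).1) (ht a hat)
        fun j hj _ => (ht j hj).le

lemma one_lt_of_pow_three_eq {α : ℝ} (hα : α ^ 3 = α ^ 2 + α + 1) : 1 < α := by
  by_contra! h
  nlinarith [sq_nonneg α, sq_nonneg (α + 1), sq_nonneg (α - 1)]

lemma trib_le_succ (n : ℕ) : trib n ≤ trib (n + 1) := by
  match n with
  | 0 | 1 => decide
  | n + 2 => show trib (n + 2) ≤ trib (n + 2) + trib (n + 1) + trib n; omega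

lemma trib_mono : Monotone trib := monotone_nat_of_le_succ trib_le_succ

lemma IsTribRep.mono {S T : Finset ℕ} (h : S ⊆ T) (hT : IsTribRep T) : IsTribRep S :=
  ⟨fun i hi => hT.1 i (h hi), fun i hi => hT.2 i ⟨h hi.1, h hi.2.1, h hi.2.2⟩⟩

/-- The greedy bound: each case peels off the top one or two indices of `S`, after which the next
index below is missing, and the recurrence absorbs the peeled terms. -/
theorem IsTribRep.sum_trib_lt {S : Finset ℕ} (hS : IsTribRep S) {n : ℕ} (hn : 2 ≤ n)
    (hlt : ∀ i ∈ S, i < n) : ∑ i ∈ S, trib i < trib n := by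
  induction n using Nat.strong_induction_on generalizing S with
  | _ n ih =>
  rcases (by omega : n = 2 ∨ 3 ≤ n) with rfl | hn3
  · have : S = ∅ := eq_empty_of_forall_notMem fun i hi => by
      have := hS.1 i hi; have := hlt i hi; omega
    simp [this, trib]
  obtain ⟨k, rfl⟩ := Nat.exists_eq_add_of_le' hn3
  have hrec : trib (k + 3) = trib (k + 2) + trib (k + 1) + trib k := rfl
  by_cases h2 : k + 2 ∈ S
  · have hk2 := hS.1 _ h2
    by_cases h1 : k + 1 ∈ S
    · have h0 : k ∉ S := fun h0 => hS.2 k ⟨h0, h1, h2⟩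
      have hk1 := hS.1 _ h1
      set S' := (S.erase (k + 2)).erase (k + 1)
      have hS' : S' ⊆ S := (erase_subset _ _).trans (erase_subset _ _)
      have hsum : ∑ i ∈ S, trib i = trib (k + 2) + (trib (k + 1) + ∑ i ∈ S', trib i) := by
        rw [add_sum_erase _ _ (mem_erase.mpr ⟨by omega, h1⟩), add_sum_erase _ _ h2]
      have := ih k (by omega) (hS.mono hS') (by omega) fun i hi => by
        have := hlt i (hS' hi)
        have : i ≠ k := fun h => h0 (h ▸ hS' hi)
        simp only [S', mem_erase] at hi
        omega
      omega
    · have hS' : S.erase (k + 2) ⊆ S := erase_subset _ _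
      have hsum := (add_sum_erase _ trib h2).symm
      have := ih (k + 1) (by omega) (hS.mono hS') (by omega) fun i hi => by
        have := hlt i (hS' hi)
        have : i ≠ k + 1 := fun h => h1 (h ▸ hS' hi)
        simp only [mem_erase] at hi
        omega
      omega
  · have := ih (k + 2) (by omega) hS (by omega) fun i hi => by
      have := hlt i hi
      have : i ≠ k + 2 := fun h => h2 (h ▸ hi)
      omega
    omega

/-- The contribution of the index `i` to `out(n) - α n`. -/
def tribErr (α : ℝ) (i : ℕ) : ℝ := trib (i + 1) - α * trib i

lemma cast_sum_trib_succ_sub_mul_eq_sum_tribErr (α : ℝ) (S : Finset ℕ) :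
    (↑(∑ i ∈ S, trib (i + 1)) : ℝ) - α * ↑(∑ i ∈ S, trib i) =
      ∑ i ∈ S, tribErr α i := by
  simp only [tribErr, sum_sub_distrib, mul_sum, Nat.cast_sum]

lemma tribErr_recurrence {α : ℝ} (hα : α ^ 3 = α ^ 2 + α + 1) (i : ℕ) :
    α * tribErr α (i + 2) + (α ^ 2 - α) * tribErr α (i + 1) + tribErr α i = 0 := by
  have hrec : (trib (i + 3) : ℝ) = trib (i + 2) + trib (i + 1) + trib i := by
    rw [trib]; push_cast; ring
  simp only [tribErr, hrec]
  linear_combination (-(trib (i + 1) : ℝ)) * hα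

lemma not_three_consecutive_tribErr_pos {α : ℝ} (hα : α ^ 3 = α ^ 2 + α + 1) (i : ℕ) :
    ¬ (0 < tribErr α i ∧ 0 < tribErr α (i + 1) ∧ 0 < tribErr α (i + 2)) := by
  rintro ⟨h0, h1, h2⟩
  have hα1 := one_lt_of_pow_three_eq hα
  have := tribErr_recurrence hα i
  nlinarith [mul_pos (by linarith : (0 : ℝ) < α) h2,
    mul_pos (mul_pos (by linarith : (0 : ℝ) < α - 1) (by linarith : (0 : ℝ) < α)) h1]

/-- For `K ≥ 3`, the set `A = {i : 3 ≤ i ≤ K, T(i+1) − α·T(i) > 0}` is a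
    Tribonacci representation set, and `n = ∑_{i∈A} T(i)` is a positive record. -/
theorem sum_of_positive_indices_is_record (α : ℝ) (hα : α ^ 3 = α ^ 2 + α + 1)
    (K : ℕ) (hK : 3 ≤ K) (A : Finset ℕ)
    (hA : ∀ i : ℕ, i ∈ A ↔ 3 ≤ i ∧ i ≤ K ∧ 0 < (trib (i + 1) : ℝ) - α * trib i) :
    IsTribRep A ∧
      ∀ m : ℕ, 1 ≤ m → m < ∑ i ∈ A, trib i →
        ∀ Sm : Finset ℕ, IsTribRep Sm → m = ∑ i ∈ Sm, trib i →
          (↑(∑ i ∈ Sm, trib (i + 1)) : ℝ) - α * m <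
            (↑(∑ i ∈ A, trib (i + 1)) : ℝ) - α * (∑ i ∈ A, trib i) := by
  have hpos : ∀ i ∈ A, 0 < tribErr α i := fun i hi => ((hA i).1 hi).2.2
  have hArep : IsTribRep A := ⟨fun i hi => ((hA i).1 hi).1, fun i ⟨h0, h1, h2⟩ =>
    not_three_consecutive_tribErr_pos hα i ⟨hpos _ h0, hpos _ h1, hpos _ h2⟩⟩
  refine ⟨hArep, fun m _ hmA Sm hSm hm => ?_⟩
  have hSmK : ∀ i ∈ Sm, i ≤ K := fun j hj => by
    by_contra! hjK
    have := hArep.sum_trib_lt (n := K + 1) (by omega) fun i hi =>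
      Nat.lt_succ_of_le ((hA i).1 hi).2.1
    have : trib (K + 1) ≤ _ :=
      (trib_mono hjK).trans (single_le_sum (fun i _ => Nat.zero_le (trib i)) hj)
    omega
  have hAS : ¬ A ⊆ Sm := fun h => (sum_le_sum_of_subset h).not_gt (hm ▸ hmA)
  rw [hm, cast_sum_trib_succ_sub_mul_eq_sum_tribErr, cast_sum_trib_succ_sub_mul_eq_sum_tribErr]
  refine sum_lt_sum_of_nonpos_of_pos (fun i hi hiA => ?_) hpos hAS
  exact not_lt.mp fun hei => hiA ((hA i).2 ⟨hSm.1 i hi, hSmK i hi, hei⟩)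
end
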